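/- The total reward of an accepting run of the MPRM equals minus the number of actions before the final action of the corresponding linearisation; hence an undiscounted reward-maximizing accepting run corresponds to a linearisation of minimum length over all plans in Π̄. -/
import Mathlib


structure Act (F : Type) [DecidableEq F] where
  prePos : Finset F
  preNeg : Finset F
  effPos : Finset F
  effNeg : Finset F

variable {F : Type} [DecidableEq F]

/-- Executing an action in a planning state. -/
def execA (S : Finset F) (a : Act F) : Finset F := (S \ a.effNeg) ∪ a.effPos

/-- The observation (postcondition) associated to an action: its positive and
negative effect literals. -/
def post (a : Act F) : Finset F × Finset F := (a.effPos, a.effNeg)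

/-- Applying an observation `P = (P⁺, P⁻)` to a planning state. -/
def stepObs (S : Finset F) (P : Finset F × Finset F) : Finset F :=
  (S \ P.2) ∪ P.1

/-- The sequence of planning states induced by a list of observations. -/
def obsStates (S : Finset F) : List (Finset F × Finset F) → List (Finset F)
  | [] => [S]
  | P :: Ps => S :: obsStates (stepObs S P) Ps

/-- The sequence of planning states induced by a list of actions. -/
def stateSeq (S : Finset F) : List (Act F) → List (Finset F)
  | [] => [S]
  | a :: l => S :: stateSeq (execA S a) l

/-- `u` is the sequence of planning states induced (from `SI`) by a proper
prefix of some linearisation in `Lin` (the set of all linearisations of the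
partial-order plans in `Π̄`): an MPRM state other than `u_g`. -/
def IsStatePrefixSeq (Lin : Set (List (Act F))) (SI : Finset F)
    (u : List (Finset F)) : Prop :=
  ∃ π ∈ Lin, ∃ p, p <+: π ∧ p.length < π.length ∧ u = stateSeq SI p

/-- A goal state: `G⁺ ⊆ S` and `G⁻ ∩ S = ∅`. -/
def isGoalSt (Gpos Gneg S : Finset F) : Prop := Gpos ⊆ S ∧ Gneg ∩ S = ∅

open Classical in
/-- The MPRM reward of one transition: `0` if the destination is the goal
state `u_g`, `−1` otherwise. -/
noncomputable def stepReward (Gpos Gneg S : Finset F)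
    (P : Finset F × Finset F) : ℤ :=
  if isGoalSt Gpos Gneg (stepObs S P) then 0 else -1

/-- The cumulative (undiscounted) reward of a run of the MPRM. -/
noncomputable def runReward (Gpos Gneg : Finset F) :
    Finset F → List (Finset F × Finset F) → ℤ
  | _, [] => 0
  | S, P :: Ps => stepReward Gpos Gneg S P + runReward Gpos Gneg (stepObs S P) Ps

lemma stateSeq_ne_nil (l : List (Act F)) (S : Finset F) : stateSeq S l ≠ [] := by
  cases l <;> simp [stateSeq]

lemma getLastD_congr {α : Type*} : ∀ (l : List α) (a d e : α),
    (a :: l).getLastD d = (a :: l).getLastD e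
  | [], _, _, _ => by simp
  | b :: t, a, d, e => by
      simp only [List.getLastD_cons]

lemma last_cons (S : Finset F) (a : Act F) (l : List (Act F)) :
    (stateSeq S (a :: l)).getLastD ∅ = (stateSeq (execA S a) l).getLastD ∅ := by
  show (S :: stateSeq (execA S a) l).getLastD ∅ = _
  rw [List.getLastD_cons]
  cases h : stateSeq (execA S a) l with
  | nil => exact absurd h (stateSeq_ne_nil _ _)
  | cons b t => exact getLastD_congr t b S ∅

lemma last_singleton (S : Finset F) (a : Act F) :
    (stateSeq S [a]).getLastD ∅ = execA S a := by
  simp [stateSeq]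

lemma stepObs_post (S : Finset F) (a : Act F) : stepObs S (post a) = execA S a := rfl

lemma runReward_cons (Gpos Gneg S : Finset F) (P : Finset F × Finset F)
    (Ps : List (Finset F × Finset F)) :
    runReward Gpos Gneg S (P :: Ps)
      = stepReward Gpos Gneg S P + runReward Gpos Gneg (stepObs S P) Ps := rfl

lemma key (Gpos Gneg : Finset F) : ∀ (l : List (Act F)) (S : Finset F), l ≠ [] →
    isGoalSt Gpos Gneg ((stateSeq S l).getLastD ∅) →
    (∀ p, p <+: l → p.length < l.length →
      ¬ isGoalSt Gpos Gneg ((stateSeq S p).getLastD ∅)) →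
    runReward Gpos Gneg S (l.map post) = -((l.length : ℤ) - 1) := by
  intro l
  induction l with
  | nil => intro S h; exact absurd rfl h
  | cons a t ih =>
    intro S _ hg hp
    cases t with
    | nil =>
      have hgoal : isGoalSt Gpos Gneg (stepObs S (post a)) := by
        rw [stepObs_post, ← last_singleton S a]; exact hg
      simp [runReward, stepReward, hgoal]
    | cons b t' =>
      have hstep : stepReward Gpos Gneg S (post a) = -1 := by
        have h1 : ¬ isGoalSt Gpos Gneg ((stateSeq S [a]).getLastD ∅) := by
          apply hp [a] ⟨b :: t', rfl⟩
          simp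
        rw [last_singleton] at h1
        rw [stepReward, stepObs_post]
        simp [h1]
      have hrest : runReward Gpos Gneg (execA S a) ((b :: t').map post)
          = -(((b :: t').length : ℤ) - 1) := by
        apply ih (execA S a) (by simp)
        · rw [← last_cons]; exact hg
        · intro p hpre hlen
          obtain ⟨q, hq⟩ := hpre
          have h2 := hp (a :: p) ⟨q, by rw [← hq]; rfl⟩
            (by simpa using Nat.succ_lt_succ hlen)
          rwa [last_cons] at h2
      rw [List.map_cons, runReward_cons, hstep, stepObs_post, hrest]
      simp only [List.length_cons]
      push_cast
      ring

/-- The total reward of an accepting run of the MPRM equals minus the number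
of actions before the final action of the corresponding linearisation; hence a
reward-maximizing accepting run corresponds to a linearisation of minimum
length over all plans in `Π̄`. -/
theorem stmt12 (Lin : Set (List (Act F))) (SI Gpos Gneg : Finset F)
    (hne : ∀ π ∈ Lin, π ≠ [])
    (hLin : ∀ π ∈ Lin, isGoalSt Gpos Gneg ((stateSeq SI π).getLastD ∅))
    (hproper : ∀ π ∈ Lin, ∀ p, p <+: π → p.length < π.length →
      ¬ isGoalSt Gpos Gneg ((stateSeq SI p).getLastD ∅))
    (π : List (Act F)) (hπ : π ∈ Lin) :
    runReward Gpos Gneg SI (π.map post) = -((π.length : ℤ) - 1) ∧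
    ((∀ π' ∈ Lin, runReward Gpos Gneg SI (π'.map post) ≤
        runReward Gpos Gneg SI (π.map post)) →
      ∀ π' ∈ Lin, π.length ≤ π'.length) := by
  have main : ∀ σ ∈ Lin, runReward Gpos Gneg SI (σ.map post) = -((σ.length : ℤ) - 1) := by
    intro σ hσ
    exact key Gpos Gneg σ SI (hne σ hσ) (hLin σ hσ) (fun p hp hl => hproper σ hσ p hp hl)
  refine ⟨main π hπ, fun hmax π' hπ' => ?_⟩
  have h := hmax π' hπ'
  rw [main π hπ, main π' hπ'] at h
  have : (π.length : ℤ) ≤ (π'.length : ℤ) := by linarith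
  exact_mod_cast this
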